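/- arXiv:1507.01234 — 3 statements merged into one kernel-verified Lean document; each statement's English description precedes it below -/
import Mathlib

section
/- Let {X_n} be a Markov chain on a finite alphabet A with all-positive transition matrix Q whose stationary distribution π is uniform on A (equivalently, Q is doubly stochastic). Then the asymptotic variance σ² = lim_{n→∞} (1/n) Var[ log( ∏_{i=1}^n Q(X̄_i|X̄_{i−1}) / π(X̄_i) ) ] equals zero if and only if the random variables {X_n} are i.i.d. with each X_n uniformly distributed on A. -/
open MeasureTheory ProbabilityTheory Filter Finset Topology
open scoped NNReal

noncomputable section

/-- Shannon entropy (natural logarithm) of a probability vector on a finite type. -/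
def ent {T : Type*} [Fintype T] (p : T → ℝ) : ℝ := ∑ t, Real.negMulLog (p t)

/-- `X` is a homogeneous first-order Markov chain with transition matrix `Q`
(and arbitrary initial distribution). -/
def IsMarkov {Ω A : Type*} [MeasurableSpace Ω] (μ : Measure Ω) (X : ℕ → Ω → A)
    (Q : A → A → ℝ) : Prop :=
  ∀ (n : ℕ) (w : Fin (n + 1) → A) (a : A),
    (μ {ω | (∀ i : Fin (n + 1), X (i : ℕ) ω = w i) ∧ X (n + 1) ω = a}).toReal
      = Q (w (Fin.last n)) a * (μ {ω | ∀ i : Fin (n + 1), X (i : ℕ) ω = w i}).toReal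

/-- Bivariate empirical distribution of consecutive pairs of the sample `x 0, …, x n`. -/
def empPair {A : Type*} [DecidableEq A] (x : ℕ → A) (n : ℕ) (a a' : A) : ℝ :=
  (∑ i ∈ Finset.range n, if x i = a ∧ x (i + 1) = a' then (1 : ℝ) else 0) / n

/-- First marginal of the bivariate empirical distribution. -/
def empFst {A : Type*} [Fintype A] [DecidableEq A] (x : ℕ → A) (n : ℕ) (a : A) : ℝ :=
  ∑ a', empPair x n a a'

/-- Second marginal of the bivariate empirical distribution. -/
def empSnd {A : Type*} [Fintype A] [DecidableEq A] (x : ℕ → A) (n : ℕ) (a' : A) : ℝ :=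
  ∑ a, empPair x n a a'

/-- Univariate empirical distribution of the sample `x 0, …, x (n-1)`. -/
def empOne {A : Type*} [DecidableEq A] (x : ℕ → A) (n : ℕ) (a : A) : ℝ :=
  (∑ i ∈ Finset.range n, if x i = a then (1 : ℝ) else 0) / n

/-- The plug-in estimator of the mutual information. -/
def pluginMI {A : Type*} [Fintype A] [DecidableEq A] (x : ℕ → A) (n : ℕ) : ℝ :=
  ent (empFst x n) + ent (empSnd x n) - ent (fun p : A × A => empPair x n p.1 p.2)

/-- The stationary mutual information `I_π(X₀; X₁)` of a chain with transition
matrix `Q` and stationary distribution `π`. -/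
def Ipi {A : Type*} [Fintype A] (Q : A → A → ℝ) (pi : A → ℝ) : ℝ :=
  ∑ a, ∑ a', pi a * Q a a' * Real.log (Q a a' / pi a')

/-- Convergence in distribution of real random variables. -/
def TendstoInDistribution {Ω : Type*} [MeasurableSpace Ω] (μ : Measure Ω)
    (W : ℕ → Ω → ℝ) (ν : Measure ℝ) : Prop :=
  ∀ f : BoundedContinuousFunction ℝ ℝ,
    Tendsto (fun n => ∫ ω, f (W n ω) ∂μ) atTop (𝓝 (∫ x, f x ∂ν))

/-- Chi-squared distribution with `s` degrees of freedom, as the Gamma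
distribution with shape `s/2` and rate `1/2`. -/
def chiSq (s : ℕ) : Measure ℝ := gammaMeasure ((s : ℝ) / 2) (1 / 2)

/-- Irreducibility and aperiodicity of a finite-state chain, expressed as
primitivity of its transition matrix. -/
def Primitive {A : Type*} [Fintype A] [DecidableEq A] (Q : Matrix A A ℝ) : Prop :=
  ∃ N : ℕ, 0 < N ∧ ∀ a a', 0 < (Q ^ N) a a'

/-- Relative entropy (Kullback–Leibler divergence, natural logarithm) between
probability vectors on a finite type. -/
def KLdiv {T : Type*} [Fintype T] (p q : T → ℝ) : ℝ :=
  ∑ t, p t * Real.log (p t / q t)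

/-!
Conditioned on its even-indexed states `X₀, X₂, …, X₂ₘ`, the chain's odd-indexed states are
independent, the one between `X₂ⱼ = a` and `X₂ⱼ₊₂ = c` being distributed as the midpoint of a
two-step bridge from `a` to `c`. By the law of total variance, `Var S₂ₘ ≥ m V`, where `V` is the
stationary mean of the bridge variances of `f a b + f b c`, `f = log (Q / π)`; hence `σ² ≥ V / 2`.
So `σ² = 0` forces every bridge variance to vanish: `Q a b * Q b c` does not depend on `b`, and
summing over `c` shows that every row of `Q` is constant, i.e. `Q` is uniform and the chain is
i.i.d. uniform. Conversely, a uniform `Q` makes every summand `log (Q / π)` vanish.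
-/

section WeightedVariance

variable {B C : Type*} [Fintype B] [Fintype C]

def weightedMean (p S : B → ℝ) : ℝ := ∑ b, p b * S b

def weightedVar (p S : B → ℝ) : ℝ := ∑ b, p b * (S b - weightedMean p S) ^ 2

lemma sum_mul_sub_weightedMean {p : B → ℝ} (hp : ∑ b, p b = 1) (S : B → ℝ) :
    ∑ b, p b * (S b - weightedMean p S) = 0 := by
  simp only [mul_sub, Finset.sum_sub_distrib, ← Finset.sum_mul, hp, one_mul, weightedMean,
    sub_self]

lemma weightedVar_nonneg {p : B → ℝ} (hp : ∀ b, 0 ≤ p b) (S : B → ℝ) :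
    0 ≤ weightedVar p S :=
  Finset.sum_nonneg fun b _ => mul_nonneg (hp b) (sq_nonneg _)

lemma eq_of_weightedVar_eq_zero {p S : B → ℝ} (hp : ∀ b, 0 < p b)
    (hV : weightedVar p S = 0) (b b' : B) : S b = S b' := by
  have hmean : ∀ b, S b = weightedMean p S := fun b => by
    have hterm := (Finset.sum_eq_zero_iff_of_nonneg fun b _ =>
      mul_nonneg (hp b).le (sq_nonneg (S b - weightedMean p S))).1 hV b (Finset.mem_univ b)
    rw [mul_eq_zero, or_iff_right (hp b).ne', sq_eq_zero_iff, sub_eq_zero] at hterm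
    exact hterm
  rw [hmean b, hmean b']

lemma weightedVar_comp_equiv (σ : C ≃ B) (p S : B → ℝ) :
    weightedVar (p ∘ σ) (S ∘ σ) = weightedVar p S := by
  have hmean : weightedMean (p ∘ σ) (S ∘ σ) = weightedMean p S :=
    σ.sum_comp fun b => p b * S b
  simp only [weightedVar, hmean]
  exact σ.sum_comp fun b => p b * (S b - weightedMean p S) ^ 2

/-- Law of total variance. -/
lemma sum_mul_weightedVar_le {p : B → ℝ} {k : B → C → ℝ} (hp : ∀ b, 0 ≤ p b)
    (hk : ∀ b, ∑ c, k b c = 1) (S : B → C → ℝ) :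
    ∑ b, p b * weightedVar (k b) (S b) ≤
      weightedVar (fun x : B × C => p x.1 * k x.1 x.2) (fun x => S x.1 x.2) := by
  set M := weightedMean (fun x : B × C => p x.1 * k x.1 x.2) (fun x => S x.1 x.2)
  have hsplit : ∀ b, ∑ c, k b c * (S b c - M) ^ 2
      = weightedVar (k b) (S b) + (weightedMean (k b) (S b) - M) ^ 2 := by
    intro b
    set m := weightedMean (k b) (S b)
    have hcentre := sum_mul_sub_weightedMean (hk b) (S b)
    calc ∑ c, k b c * (S b c - M) ^ 2
        = ∑ c, k b c * (S b c - m) ^ 2 + 2 * (m - M) * ∑ c, k b c * (S b c - m)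
          + (m - M) ^ 2 * ∑ c, k b c := by
          simp only [Finset.mul_sum, ← Finset.sum_add_distrib]
          exact Finset.sum_congr rfl fun c _ => by ring
      _ = _ := by rw [hcentre, hk b, weightedVar]; ring
  calc ∑ b, p b * weightedVar (k b) (S b)
      ≤ ∑ b, p b * ∑ c, k b c * (S b c - M) ^ 2 := by
        gcongr with b
        · exact hp b
        · rw [hsplit b]
          exact le_add_of_nonneg_right (sq_nonneg _)
    _ = _ := by
        simp only [weightedVar, Fintype.sum_prod_type, Finset.mul_sum, mul_assoc]
        rfl

lemma weightedVar_prod_add {p : B → ℝ} {q : C → ℝ} (hp : ∑ b, p b = 1) (hq : ∑ c, q c = 1)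
    (f : B → ℝ) (g : C → ℝ) :
    weightedVar (fun x : B × C => p x.1 * q x.2) (fun x => f x.1 + g x.2)
      = weightedVar p f + weightedVar q g := by
  set mf := weightedMean p f
  set mg := weightedMean q g
  have hmean : weightedMean (fun x : B × C => p x.1 * q x.2) (fun x => f x.1 + g x.2)
      = mf + mg := by
    calc ∑ x : B × C, p x.1 * q x.2 * (f x.1 + g x.2)
        = (∑ b, p b * f b) * ∑ c, q c + (∑ b, p b) * ∑ c, q c * g c := by
          simp only [Finset.sum_mul_sum, ← Finset.sum_add_distrib, Fintype.sum_prod_type]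
          exact Finset.sum_congr rfl fun b _ => Finset.sum_congr rfl fun c _ => by ring
      _ = mf + mg := by rw [hp, hq, mul_one, one_mul]; rfl
  calc ∑ x : B × C, p x.1 * q x.2 * (f x.1 + g x.2 - weightedMean _ _) ^ 2
      = (∑ b, p b * (f b - mf) ^ 2) * ∑ c, q c + (∑ b, p b) * ∑ c, q c * (g c - mg) ^ 2
        + 2 * ((∑ b, p b * (f b - mf)) * ∑ c, q c * (g c - mg)) := by
        rw [hmean, Fintype.sum_prod_type, Finset.sum_mul_sum, Finset.sum_mul_sum,
          Finset.sum_mul_sum, Finset.mul_sum]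
        simp only [Finset.mul_sum, ← Finset.sum_add_distrib]
        exact Finset.sum_congr rfl fun b _ => Finset.sum_congr rfl fun c _ => by ring
    _ = _ := by
        rw [hp, hq, sum_mul_sub_weightedMean hp, mul_one, one_mul, zero_mul,
          mul_zero, add_zero]
        rfl

lemma sum_prod_eq_one {m : ℕ} {k : Fin m → B → ℝ} (hk : ∀ j, ∑ b, k j b = 1) :
    ∑ o : Fin m → B, ∏ j, k j (o j) = 1 := by
  rw [← Fintype.prod_sum k]
  simp [hk]

lemma weightedVar_pi_sum {m : ℕ} {k : Fin m → B → ℝ} (hk : ∀ j, ∑ b, k j b = 1)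
    (h : Fin m → B → ℝ) :
    weightedVar (fun o : Fin m → B => ∏ j, k j (o j)) (fun o => ∑ j, h j (o j))
      = ∑ j, weightedVar (k j) (h j) := by
  induction m with
  | zero => simp [weightedVar, weightedMean]
  | succ m ih =>
    rw [← weightedVar_comp_equiv (Fin.consEquiv fun _ => B)]
    simp only [Function.comp_def, Fin.consEquiv_apply, Fin.prod_univ_succ, Fin.sum_univ_succ,
      Fin.cons_zero, Fin.cons_succ]
    rw [weightedVar_prod_add (hk 0) (sum_prod_eq_one fun j => hk j.succ) (h 0)
      (fun o => ∑ j, h j.succ (o j)), ih fun j => hk j.succ]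

end WeightedVariance

lemma comp_eq_sum_indicator {Ω B : Type*} [Fintype B] (g : Ω → B) (φ : B → ℝ) :
    (fun ω => φ (g ω)) = fun ω => ∑ b, (g ⁻¹' {b}).indicator (fun _ => φ b) ω := by
  classical
  funext ω
  simp [Set.indicator_apply]

section FiniteValued
variable {Ω B : Type*} [MeasurableSpace Ω] [Fintype B] {μ : Measure Ω}

lemma nullMeasurableSet_of_measure_add_measure_compl_le [IsFiniteMeasure μ] {s : Set Ω}
    (h : μ s + μ sᶜ ≤ μ Set.univ) : NullMeasurableSet s μ := by
  -- the measurable hulls of `s` and `sᶜ` cover the space and, by `h`, overlap in a null set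
  set t := toMeasurable μ s
  set u := toMeasurable μ sᶜ
  have htu : t ∪ u = Set.univ := Set.eq_univ_of_univ_subset fun x _ =>
    (em (x ∈ s)).imp (subset_toMeasurable μ s ·) (subset_toMeasurable μ sᶜ ·)
  have hinter : μ (t ∩ u) = 0 := by
    have hunion := measure_union_add_inter (μ := μ) t (measurableSet_toMeasurable μ sᶜ)
    rw [htu, measure_toMeasurable, measure_toMeasurable] at hunion
    have hle : μ Set.univ + μ (t ∩ u) ≤ μ Set.univ + 0 := by rwa [add_zero, hunion]
    exact nonpos_iff_eq_zero.1 ((ENNReal.add_le_add_iff_left (measure_ne_top μ _)).1 hle)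
  refine (measurableSet_toMeasurable μ s).nullMeasurableSet.congr ?_
  rw [ae_eq_set]
  constructor
  · refine measure_mono_null (fun x hx => ?_) hinter
    exact ⟨hx.1, subset_toMeasurable μ sᶜ hx.2⟩
  · rw [Set.sdiff_eq_empty.2 (subset_toMeasurable μ s), measure_empty]

lemma nullMeasurableSet_preimage_singleton_of_sum_measureReal_eq [IsFiniteMeasure μ]
    {g : Ω → B} (h : ∑ b, μ.real (g ⁻¹' {b}) = μ.real Set.univ) (b : B) :
    NullMeasurableSet (g ⁻¹' {b}) μ := by
  classical
  have hsum : ∑ b', μ (g ⁻¹' {b'}) = μ Set.univ := by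
    rw [← ofReal_measureReal (s := Set.univ), ← h,
      ENNReal.ofReal_sum_of_nonneg fun _ _ => measureReal_nonneg]
    exact Finset.sum_congr rfl fun _ _ => (ofReal_measureReal).symm
  refine nullMeasurableSet_of_measure_add_measure_compl_le (le_of_le_of_eq ?_ hsum)
  have hcompl : (g ⁻¹' {b})ᶜ ⊆ ⋃ b' ∈ univ.erase b, g ⁻¹' {b'} := fun ω hω =>
    Set.mem_biUnion (Finset.mem_erase.2 ⟨hω, Finset.mem_univ _⟩) rfl
  calc μ (g ⁻¹' {b}) + μ (g ⁻¹' {b})ᶜ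
      ≤ μ (g ⁻¹' {b}) + ∑ b' ∈ univ.erase b, μ (g ⁻¹' {b'}) := by
        gcongr
        exact (measure_mono hcompl).trans (measure_biUnion_finset_le _ _)
    _ = ∑ b', μ (g ⁻¹' {b'}) :=
        Finset.add_sum_erase univ (fun b' => μ (g ⁻¹' {b'})) (Finset.mem_univ b)

lemma aemeasurable_comp_of_nullMeasurableSet_preimage {g : Ω → B}
    (hg : ∀ b, NullMeasurableSet (g ⁻¹' {b}) μ) (φ : B → ℝ) :
    AEMeasurable (fun ω => φ (g ω)) μ := by
  rw [comp_eq_sum_indicator]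
  exact Finset.aemeasurable_fun_sum _ fun b _ =>
    (aemeasurable_const (b := φ b)).indicator₀ (hg b)

lemma integral_comp_eq_sum [IsFiniteMeasure μ] {g : Ω → B}
    (hg : ∀ b, NullMeasurableSet (g ⁻¹' {b}) μ) (φ : B → ℝ) :
    ∫ ω, φ (g ω) ∂μ = ∑ b, μ.real (g ⁻¹' {b}) * φ b := by
  rw [comp_eq_sum_indicator,
    integral_finsetSum _ fun b _ => (integrable_const _).indicator₀ (hg b)]
  refine Finset.sum_congr rfl fun b _ => ?_
  rw [integral_indicator₀ (hg b), setIntegral_const, smul_eq_mul]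

lemma variance_comp_eq_weightedVar [IsFiniteMeasure μ] {g : Ω → B}
    (hg : ∀ b, NullMeasurableSet (g ⁻¹' {b}) μ) (φ : B → ℝ) :
    variance (fun ω => φ (g ω)) μ = weightedVar (fun b => μ.real (g ⁻¹' {b})) φ := by
  rw [variance_eq_integral (aemeasurable_comp_of_nullMeasurableSet_preimage hg φ),
    integral_comp_eq_sum hg fun b => (φ b - ∫ ω, φ (g ω) ∂μ) ^ 2, integral_comp_eq_sum hg φ]
  rfl

end FiniteValued

section Paths
variable {A : Type*}

def pathWeight (r : A → ℝ) (Q : A → A → ℝ) (n : ℕ) (w : Fin (n + 1) → A) : ℝ :=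
  r (w 0) * ∏ i : Fin n, Q (w i.castSucc) (w i.succ)

def pathSum (f : A → A → ℝ) (n : ℕ) (w : Fin (n + 1) → A) : ℝ :=
  ∑ i : Fin n, f (w i.castSucc) (w i.succ)

lemma pathWeight_snoc (r : A → ℝ) (Q : A → A → ℝ) {n : ℕ} (w : Fin (n + 1) → A) (a : A) :
    pathWeight r Q (n + 1) (Fin.snoc w a) = pathWeight r Q n w * Q (w (Fin.last n)) a := by
  simp [pathWeight, Fin.prod_univ_castSucc, -Fin.castSucc_succ, Fin.succ_castSucc, mul_assoc]

lemma pathSum_snoc (f : A → A → ℝ) {n : ℕ} (w : Fin (n + 1) → A) (a : A) :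
    pathSum f (n + 1) (Fin.snoc w a) = pathSum f n w + f (w (Fin.last n)) a := by
  simp [pathSum, Fin.sum_univ_castSucc, -Fin.castSucc_succ, Fin.succ_castSucc]

lemma pathWeight_nonneg {r : A → ℝ} {Q : A → A → ℝ} (hr : ∀ a, 0 ≤ r a)
    (hQ : ∀ a b, 0 ≤ Q a b) {n : ℕ} (w : Fin (n + 1) → A) : 0 ≤ pathWeight r Q n w :=
  mul_nonneg (hr _) (Finset.prod_nonneg fun _ _ => hQ _ _)

variable [Fintype A] {r : A → ℝ} {Q : A → A → ℝ}

lemma sum_fin_snoc {n : ℕ} (F : (Fin (n + 1) → A) → ℝ) :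
    ∑ w, F w = ∑ w : Fin n → A, ∑ a, F (Fin.snoc w a) := by
  rw [← (Fin.snocEquiv fun _ => A).sum_comp, Fintype.sum_prod_type_right]
  rfl

lemma sum_pathWeight_mul_last (hr : ∀ b, ∑ a, r a * Q a b = r b) (φ : A → ℝ) (n : ℕ) :
    ∑ w, pathWeight r Q n w * φ (w (Fin.last n)) = ∑ a, r a * φ a := by
  induction n generalizing φ with
  | zero =>
    rw [sum_fin_snoc]
    simp [pathWeight, Fin.snoc]
  | succ n ih =>
    rw [sum_fin_snoc]
    simp only [pathWeight_snoc, Fin.snoc_last, mul_assoc, ← Finset.mul_sum]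
    rw [ih fun b => ∑ c, Q b c * φ c]
    simp only [Finset.mul_sum, ← mul_assoc]
    rw [Finset.sum_comm]
    simp only [← Finset.sum_mul, hr]

lemma sum_pathWeight (hr : ∀ b, ∑ a, r a * Q a b = r b) (n : ℕ) :
    ∑ w, pathWeight r Q n w = ∑ a, r a := by
  simpa using sum_pathWeight_mul_last hr (fun _ => 1) n

lemma sum_pathWeight_mul_pathSum (hQ : ∀ a, ∑ b, Q a b = 1)
    (hr : ∀ b, ∑ a, r a * Q a b = r b) (v : A → A → ℝ) (n : ℕ) :
    ∑ w, pathWeight r Q n w * pathSum v n w = n * ∑ a, ∑ c, r a * Q a c * v a c := by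
  induction n with
  | zero => simp [pathSum]
  | succ n ih =>
    rw [sum_fin_snoc]
    calc ∑ w : Fin (n + 1) → A, ∑ a, pathWeight r Q (n + 1) (Fin.snoc w a)
          * pathSum v (n + 1) (Fin.snoc w a)
        = ∑ w, pathWeight r Q n w * pathSum v n w * ∑ a, Q (w (Fin.last n)) a
          + ∑ w, pathWeight r Q n w * ∑ a, Q (w (Fin.last n)) a * v (w (Fin.last n)) a := by
          simp only [pathWeight_snoc, pathSum_snoc, Finset.mul_sum, ← Finset.sum_add_distrib]
          exact Finset.sum_congr rfl fun w _ => Finset.sum_congr rfl fun a _ => by ring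
      _ = (n + 1 : ℕ) * ∑ a, ∑ c, r a * Q a c * v a c := by
          rw [Finset.sum_congr rfl fun w _ => by rw [hQ, mul_one], ih,
            sum_pathWeight_mul_last hr fun b => ∑ c, Q b c * v b c]
          have hV : ∑ a, r a * ∑ c, Q a c * v a c = ∑ a, ∑ c, r a * Q a c * v a c := by
            simp only [Finset.mul_sum, mul_assoc]
          rw [hV]
          push_cast
          ring

end Paths

section MarkovLaw
variable {Ω A : Type*} [MeasurableSpace Ω] {μ : Measure Ω} {X : ℕ → Ω → A}
  {Q : A → A → ℝ} {r : A → ℝ}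

lemma IsMarkov.measureReal_cylinder (hX : IsMarkov μ X Q)
    (h0 : ∀ a, μ.real {ω | X 0 ω = a} = r a) (n : ℕ) (w : Fin (n + 1) → A) :
    μ.real {ω | ∀ i : Fin (n + 1), X i ω = w i} = pathWeight r Q n w := by
  induction n with
  | zero => simpa [Fin.forall_fin_one, pathWeight] using h0 (w 0)
  | succ n ih =>
    obtain ⟨v, a, rfl⟩ : ∃ v a, w = Fin.snoc v a :=
      ⟨Fin.init w, w (Fin.last _), (Fin.snoc_init_self w).symm⟩
    have hcyl : {ω | ∀ i : Fin (n + 2), X i ω = (Fin.snoc v a : Fin (n + 2) → A) i}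
        = {ω | (∀ i : Fin (n + 1), X i ω = v i) ∧ X (n + 1) ω = a} := by
      ext ω
      simp [Fin.forall_fin_succ']
    rw [hcyl, pathWeight_snoc, ← ih, mul_comm]
    exact hX n v a

lemma IsMarkov.variance_sum_range [Fintype A] [IsProbabilityMeasure μ] (hX : IsMarkov μ X Q)
    (h0 : ∀ a, μ.real {ω | X 0 ω = a} = r a) (hr : ∀ b, ∑ a, r a * Q a b = r b)
    (hr₁ : ∑ a, r a = 1) (f : A → A → ℝ) (n : ℕ) :
    variance (fun ω => ∑ i ∈ Finset.range n, f (X i ω) (X (i + 1) ω)) μ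
      = weightedVar (pathWeight r Q n) (pathSum f n) := by
  set g : Ω → Fin (n + 1) → A := fun ω i => X i ω
  have hlaw : ∀ w, μ.real (g ⁻¹' {w}) = pathWeight r Q n w := fun w => by
    rw [← hX.measureReal_cylinder h0 n w]
    congr 1
    ext ω
    simp [g, funext_iff]
  have hg : ∀ w, NullMeasurableSet (g ⁻¹' {w}) μ :=
    nullMeasurableSet_preimage_singleton_of_sum_measureReal_eq <| by
      simp [hlaw, sum_pathWeight hr, hr₁]
  have hpath : (fun ω => ∑ i ∈ Finset.range n, f (X i ω) (X (i + 1) ω))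
      = fun ω => pathSum f n (g ω) := by
    funext ω
    simp [pathSum, g, Fin.sum_univ_eq_sum_range (fun i => f (X i ω) (X (i + 1) ω))]
  rw [hpath, variance_comp_eq_weightedVar hg]
  simp only [hlaw]

lemma IsMarkov.measureReal_cylinder_eq_pow [IsProbabilityMeasure μ] {κ : ℝ}
    (hX : IsMarkov μ X Q) (h0 : ∀ a, μ.real {ω | X 0 ω = a} = κ) (hQ : ∀ a b, Q a b = κ)
    (n : ℕ) (w : Fin n → A) : μ.real {ω | ∀ i : Fin n, X i ω = w i} = κ ^ n := by
  cases n with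
  | zero => simp
  | succ n =>
    rw [hX.measureReal_cylinder h0 n w]
    simp [pathWeight, hQ, pow_succ']

lemma IsMarkov.eq_of_measureReal_cylinder_eq_pow {κ : ℝ} (hX : IsMarkov μ X Q) (hκ : κ ≠ 0)
    (h : ∀ (n : ℕ) (w : Fin n → A), μ.real {ω | ∀ i : Fin n, X i ω = w i} = κ ^ n)
    (a a' : A) : Q a a' = κ := by
  have hpair : μ.real {ω | (∀ i : Fin 1, X i ω = a) ∧ X 1 ω = a'} = κ ^ 2 := by
    rw [← h 2 ![a, a']]
    congr 1
    ext ω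
    simp [Fin.forall_fin_two]
  have hstep := hX 0 (fun _ => a) a'
  rw [← measureReal_def, ← measureReal_def, hpair, h 1] at hstep
  rw [pow_one, sq] at hstep
  exact (mul_right_cancel₀ hκ hstep).symm

end MarkovLaw

section Interleave
variable {A : Type*} {m : ℕ}

def evenOddEquiv (m : ℕ) : Fin (m + 1) ⊕ Fin m ≃ Fin (2 * m + 1) :=
  Equiv.ofBijective (Sum.elim (fun j => ⟨2 * j, by omega⟩) fun j => ⟨2 * j + 1, by omega⟩) <| by
    refine (Fintype.bijective_iff_injective_and_card _).2 ⟨?_, by simp; ring⟩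
    rintro (i | i) (j | j) h <;> simp [Fin.ext_iff] at h ⊢ <;> omega

/-- `interleave m (e, o)` is the path `e 0, o 0, e 1, o 1, …, o (m - 1), e m`. -/
def interleave (m : ℕ) : (Fin (m + 1) → A) × (Fin m → A) ≃ (Fin (2 * m + 1) → A) :=
  (Equiv.sumArrowEquivProdArrow _ _ A).symm.trans ((evenOddEquiv m).arrowCongr (Equiv.refl A))

lemma interleave_apply_of_eq_two_mul (x : (Fin (m + 1) → A) × (Fin m → A)) (j : Fin (m + 1))
    {i : Fin (2 * m + 1)} (hi : (i : ℕ) = 2 * j) : interleave m x i = x.1 j := by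
  obtain rfl : i = evenOddEquiv m (Sum.inl j) := Fin.ext hi
  simp [interleave, Equiv.sumArrowEquivProdArrow]

lemma interleave_apply_of_eq_two_mul_add_one (x : (Fin (m + 1) → A) × (Fin m → A)) (j : Fin m)
    {i : Fin (2 * m + 1)} (hi : (i : ℕ) = 2 * j + 1) : interleave m x i = x.2 j := by
  obtain rfl : i = evenOddEquiv m (Sum.inr j) := Fin.ext hi
  simp [interleave, Equiv.sumArrowEquivProdArrow]

@[to_additive]
lemma prod_fin_two_mul {M : Type*} [CommMonoid M] (F : Fin (2 * m) → M) :
    ∏ i, F i = ∏ j : Fin m, F ⟨2 * j, by omega⟩ * F ⟨2 * j + 1, by omega⟩ := by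
  rw [← ((finProdFinEquiv.trans (finCongr (mul_comm m 2))).prod_comp F),
    Fintype.prod_prod_type]
  refine Finset.prod_congr rfl fun j _ => ?_
  rw [Fin.prod_univ_two]
  congr 2 <;> ext
  · simp
  · simp; ring

@[to_additive]
lemma prod_interleave {M : Type*} [CommMonoid M] (G : A → A → M)
    (x : (Fin (m + 1) → A) × (Fin m → A)) :
    ∏ i : Fin (2 * m), G (interleave m x i.castSucc) (interleave m x i.succ)
      = ∏ j : Fin m, G (x.1 j.castSucc) (x.2 j) * G (x.2 j) (x.1 j.succ) := by
  rw [prod_fin_two_mul]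
  refine Finset.prod_congr rfl fun j _ => ?_
  rw [interleave_apply_of_eq_two_mul x j.castSucc (by simp),
    interleave_apply_of_eq_two_mul_add_one x j (by simp),
    interleave_apply_of_eq_two_mul_add_one x j (by simp),
    interleave_apply_of_eq_two_mul x j.succ (by simp; ring)]

lemma pathWeight_interleave (r : A → ℝ) (Q : A → A → ℝ)
    (x : (Fin (m + 1) → A) × (Fin m → A)) :
    pathWeight r Q (2 * m) (interleave m x)
      = r (x.1 0) * ∏ j : Fin m, Q (x.1 j.castSucc) (x.2 j) * Q (x.2 j) (x.1 j.succ) := by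
  rw [pathWeight, prod_interleave, interleave_apply_of_eq_two_mul x 0 (by simp)]

end Interleave

section Bridge
variable {A : Type*} [Fintype A] {Q : A → A → ℝ}

def twoStep (Q : A → A → ℝ) (a c : A) : ℝ := ∑ b, Q a b * Q b c

/-- Law of the midpoint `b` of a two-step transition `a → b → c`, given its endpoints. -/
def bridge (Q : A → A → ℝ) (a c b : A) : ℝ := Q a b * Q b c / twoStep Q a c

def bridgeVar (Q f : A → A → ℝ) (a c : A) : ℝ :=
  weightedVar (bridge Q a c) fun b => f a b + f b c

lemma twoStep_pos (hQ : ∀ a b, 0 < Q a b) (a c : A) : 0 < twoStep Q a c :=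
  Finset.sum_pos (fun b _ => mul_pos (hQ a b) (hQ b c)) ⟨a, Finset.mem_univ a⟩

lemma sum_twoStep (hQ : ∀ a, ∑ b, Q a b = 1) (a : A) : ∑ c, twoStep Q a c = 1 := by
  simp only [twoStep]
  rw [Finset.sum_comm]
  simp [← Finset.mul_sum, hQ]

lemma sum_mul_twoStep {r : A → ℝ} (hr : ∀ b, ∑ a, r a * Q a b = r b) (c : A) :
    ∑ a, r a * twoStep Q a c = r c := by
  simp only [twoStep, Finset.mul_sum, ← mul_assoc]
  rw [Finset.sum_comm]
  simp [← Finset.sum_mul, hr]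

lemma bridge_pos (hQ : ∀ a b, 0 < Q a b) (a c b : A) : 0 < bridge Q a c b :=
  div_pos (mul_pos (hQ a b) (hQ b c)) (twoStep_pos hQ a c)

lemma sum_bridge (hQ : ∀ a b, 0 < Q a b) (a c : A) : ∑ b, bridge Q a c b = 1 := by
  simp only [bridge]
  rw [← Finset.sum_div]
  exact div_self (twoStep_pos hQ a c).ne'

end Bridge

section LowerBound
variable {A : Type*} [Fintype A] {Q : A → A → ℝ} {r : A → ℝ}

/-- Conditioning on the even-indexed states leaves independent two-step bridges. -/
lemma mul_sum_bridgeVar_le_weightedVar (hQ : ∀ a b, 0 < Q a b) (hrow : ∀ a, ∑ b, Q a b = 1)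
    (hr₀ : ∀ a, 0 ≤ r a) (hr : ∀ b, ∑ a, r a * Q a b = r b) (f : A → A → ℝ) (m : ℕ) :
    m * ∑ a, ∑ c, r a * twoStep Q a c * bridgeVar Q f a c
      ≤ weightedVar (pathWeight r Q (2 * m)) (pathSum f (2 * m)) := by
  set k : (Fin (m + 1) → A) → Fin m → A → ℝ := fun e j => bridge Q (e j.castSucc) (e j.succ)
  set h : (Fin (m + 1) → A) → Fin m → A → ℝ :=
    fun e j b => f (e j.castSucc) b + f b (e j.succ)
  have hk : ∀ e j, ∑ b, k e j b = 1 := fun e j => sum_bridge hQ _ _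
  have hweight : pathWeight r Q (2 * m) ∘ interleave m
      = fun x => pathWeight r (twoStep Q) m x.1 * ∏ j, k x.1 j (x.2 j) := by
    funext x
    rw [Function.comp_apply, pathWeight_interleave]
    simp only [pathWeight, k, bridge, Finset.prod_div_distrib, mul_assoc]
    rw [mul_div_cancel₀ _ (Finset.prod_ne_zero_iff.2 fun j _ => (twoStep_pos hQ _ _).ne')]
  have hsum : pathSum f (2 * m) ∘ interleave m = fun x => ∑ j, h x.1 j (x.2 j) :=
    funext (sum_interleave f)
  calc m * ∑ a, ∑ c, r a * twoStep Q a c * bridgeVar Q f a c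
      = ∑ e, pathWeight r (twoStep Q) m e * pathSum (bridgeVar Q f) m e :=
        (sum_pathWeight_mul_pathSum (sum_twoStep hrow) (sum_mul_twoStep hr) _ m).symm
    _ = ∑ e, pathWeight r (twoStep Q) m e
          * weightedVar (fun o : Fin m → A => ∏ j, k e j (o j)) (fun o => ∑ j, h e j (o j)) := by
        refine Finset.sum_congr rfl fun e _ => ?_
        rw [weightedVar_pi_sum (hk e)]
        rfl
    _ ≤ weightedVar (fun x : (Fin (m + 1) → A) × (Fin m → A) =>
            pathWeight r (twoStep Q) m x.1 * ∏ j, k x.1 j (x.2 j))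
          (fun x => ∑ j, h x.1 j (x.2 j)) :=
        sum_mul_weightedVar_le (pathWeight_nonneg hr₀ fun a c => (twoStep_pos hQ a c).le)
          (fun e => sum_prod_eq_one (hk e)) _
    _ = weightedVar (pathWeight r Q (2 * m)) (pathSum f (2 * m)) := by
        rw [← hweight, ← hsum, weightedVar_comp_equiv]

end LowerBound

lemma le_two_mul_of_tendsto_div {u : ℕ → ℝ} {σ V : ℝ}
    (hu : Tendsto (fun n : ℕ => u n / n) atTop (𝓝 σ)) (hV : ∀ m : ℕ, m * V ≤ u (2 * m)) :
    V ≤ 2 * σ := by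
  have heven : Tendsto (fun m : ℕ => u (2 * m) / (2 * m : ℕ)) atTop (𝓝 σ) :=
    hu.comp (tendsto_id.const_mul_atTop' two_pos)
  have hhalf : V / 2 ≤ σ := by
    refine ge_of_tendsto heven ((eventually_ge_atTop 1).mono fun m hm => ?_)
    have hm' : (1 : ℝ) ≤ m := by exact_mod_cast hm
    rw [le_div_iff₀ (by positivity)]
    push_cast
    linarith [hV m]
  linarith

section Uniform
variable {A : Type*} [Fintype A] {Q : A → A → ℝ}

lemma eq_inv_card_of_mul_eq_mul (hQ : ∀ a, ∑ b, Q a b = 1)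
    (h : ∀ a b b' c, Q a b * Q b c = Q a b' * Q b' c) (a b : A) :
    Q a b = 1 / Fintype.card A := by
  have hconst : ∀ b', Q a b' = Q a b := fun b' => by
    simpa [← Finset.mul_sum, hQ] using Finset.sum_congr rfl fun c (_ : c ∈ univ) => h a b' b c
  have hcard : (Fintype.card A : ℝ) * Q a b = 1 := by
    rw [← hQ a, Finset.sum_congr rfl fun b' _ => hconst b', Finset.sum_const, card_univ,
      nsmul_eq_mul]
  rw [eq_div_iff (left_ne_zero_of_mul_eq_one hcard), mul_comm, hcard]

lemma mul_eq_mul_of_bridgeVar_log_eq_zero (hQ : ∀ a b, 0 < Q a b) {κ : ℝ} (hκ : 0 < κ)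
    {a c : A} (h : bridgeVar Q (fun a b => Real.log (Q a b / κ)) a c = 0) (b b' : A) :
    Q a b * Q b c = Q a b' * Q b' c := by
  have hlog := eq_of_weightedVar_eq_zero (bridge_pos hQ a c) h b b'
  have hpos : ∀ x y, 0 < Q x y / κ := fun x y => div_pos (hQ x y) hκ
  simp only [← Real.log_mul (hpos _ _).ne' (hpos _ _).ne'] at hlog
  have := Real.log_injOn_pos (mul_pos (hpos _ _) (hpos _ _)) (mul_pos (hpos _ _) (hpos _ _)) hlog
  field_simp at this
  exact this

lemma bridgeVar_eq_zero_of_sum_nonpos (hQ : ∀ a b, 0 < Q a b) {r : A → ℝ} (hr : ∀ a, 0 < r a)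
    {f : A → A → ℝ} (h : ∑ a, ∑ c, r a * twoStep Q a c * bridgeVar Q f a c ≤ 0) (a c : A) :
    bridgeVar Q f a c = 0 := by
  have hterm : ∀ a c, 0 ≤ r a * twoStep Q a c * bridgeVar Q f a c := fun a c =>
    mul_nonneg (mul_pos (hr a) (twoStep_pos hQ a c)).le
      (weightedVar_nonneg (fun b => (bridge_pos hQ a c b).le) _)
  have hrow : ∀ a, 0 ≤ ∑ c, r a * twoStep Q a c * bridgeVar Q f a c := fun a =>
    Finset.sum_nonneg fun c _ => hterm a c
  have hrow_zero := (Finset.sum_eq_zero_iff_of_nonneg fun a _ => hrow a).1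
    (le_antisymm h (Finset.sum_nonneg fun a _ => hrow a)) a (Finset.mem_univ a)
  have hterm_zero :=
    (Finset.sum_eq_zero_iff_of_nonneg fun c _ => hterm a c).1 hrow_zero c (Finset.mem_univ c)
  exact (mul_eq_zero.1 hterm_zero).resolve_left (mul_pos (hr a) (twoStep_pos hQ a c)).ne'

lemma eq_inv_card_of_sum_bridgeVar_log_nonpos (hQ : ∀ a b, 0 < Q a b)
    (hrow : ∀ a, ∑ b, Q a b = 1)
    (h : ∑ a, ∑ c, 1 / (Fintype.card A : ℝ) * twoStep Q a c
      * bridgeVar Q (fun a b => Real.log (Q a b / (1 / Fintype.card A))) a c ≤ 0) (a b : A) :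
    Q a b = 1 / Fintype.card A := by
  have hκ : (0 : ℝ) < 1 / Fintype.card A := by
    have : Nonempty A := ⟨a⟩
    positivity
  refine eq_inv_card_of_mul_eq_mul hrow (fun a b b' c => ?_) a b
  exact mul_eq_mul_of_bridgeVar_log_eq_zero hQ hκ
    (bridgeVar_eq_zero_of_sum_nonpos hQ (fun _ => hκ) h a c) b b'

end Uniform

theorem stmt2_general {Ω' A : Type*} [MeasurableSpace Ω'] [Fintype A]
    (μ' : Measure Ω') [IsProbabilityMeasure μ']
    (Xbar : ℕ → Ω' → A) (Q : A → A → ℝ) (pi : A → ℝ)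
    (hQpos : ∀ a a', 0 < Q a a') (hQrow : ∀ a, ∑ a', Q a a' = 1)
    (hdouble : ∀ a', ∑ a, Q a a' = 1)
    (hunif : ∀ a, pi a = 1 / Fintype.card A)
    (hMarkov' : IsMarkov μ' Xbar Q)
    (hinit' : ∀ a, (μ' {ω | Xbar 0 ω = a}).toReal = pi a)
    (σ2 : ℝ)
    (hσ2 : Tendsto (fun n : ℕ =>
        variance (fun ω => ∑ i ∈ Finset.range n,
          Real.log (Q (Xbar i ω) (Xbar (i + 1) ω) / pi (Xbar (i + 1) ω))) μ' / n)
      atTop (𝓝 σ2)) :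
    σ2 = 0 ↔ ∀ (n : ℕ) (w : Fin n → A),
      (μ' {ω | ∀ i : Fin n, Xbar (i : ℕ) ω = w i}).toReal
        = (1 / (Fintype.card A : ℝ)) ^ n := by
  obtain ⟨ω₀⟩ := nonempty_of_isProbabilityMeasure μ'
  have hN : (0 : ℝ) < Fintype.card A := by
    have : Nonempty A := ⟨Xbar 0 ω₀⟩
    positivity
  set κ : ℝ := 1 / Fintype.card A with hκ_def
  have hκ : 0 < κ := by positivity
  have h0 : ∀ a, μ'.real {ω | Xbar 0 ω = a} = κ := fun a => (hinit' a).trans (hunif a)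
  have hstat : ∀ b, ∑ a, κ * Q a b = κ := by simp [← Finset.mul_sum, hdouble]
  simp only [hunif] at hσ2
  set f : A → A → ℝ := fun a b => Real.log (Q a b / κ)
  have hvar : ∀ n : ℕ, variance (fun ω => ∑ i ∈ Finset.range n,
      Real.log (Q (Xbar i ω) (Xbar (i + 1) ω) / κ)) μ'
        = weightedVar (pathWeight (fun _ => κ) Q n) (pathSum f n) :=
    hMarkov'.variance_sum_range h0 hstat (by simp [κ, hN.ne']) f
  constructor
  · rintro rfl
    have hV := le_two_mul_of_tendsto_div (hσ2.congr fun n => by rw [hvar])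
      (mul_sum_bridgeVar_le_weightedVar hQpos hQrow (fun _ => hκ.le) hstat f)
    exact hMarkov'.measureReal_cylinder_eq_pow h0
      (eq_inv_card_of_sum_bridgeVar_log_nonpos hQpos hQrow (by rw [← hκ_def]; linarith))
  · intro hiid
    have hQunif := hMarkov'.eq_of_measureReal_cylinder_eq_pow hκ.ne' hiid
    have hzero : variance (fun _ : Ω' => (0 : ℝ)) μ' = 0 := variance_zero μ'
    refine tendsto_nhds_unique hσ2 ?_
    simp [hQunif, hκ.ne', hzero]

/-- **Proposition 2** (Kontoyiannis–Skoularidou): for a chain with all-positive,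
doubly stochastic transition matrix (so that the stationary distribution is
uniform), the asymptotic variance `σ²` is zero if and only if the variables of
the stationary chain are i.i.d., each uniformly distributed on `A`. -/
theorem stmt2 {Ω Ω' A : Type*} [MeasurableSpace Ω] [MeasurableSpace Ω']
    [MeasurableSpace A] [Fintype A] [DecidableEq A]
    (μ : Measure Ω) (μ' : Measure Ω') [IsProbabilityMeasure μ] [IsProbabilityMeasure μ']
    (X : ℕ → Ω → A) (Xbar : ℕ → Ω' → A) (Q : A → A → ℝ) (pi : A → ℝ)
    (hXmeas : ∀ i, Measurable (X i)) (hXbarmeas : ∀ i, Measurable (Xbar i))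
    (hQpos : ∀ a a', 0 < Q a a') (hQrow : ∀ a, ∑ a', Q a a' = 1)
    (hdouble : ∀ a', ∑ a, Q a a' = 1)
    (hMarkov : IsMarkov μ X Q)
    (hunif : ∀ a, pi a = 1 / Fintype.card A)
    (hMarkov' : IsMarkov μ' Xbar Q)
    (hinit' : ∀ a, (μ' {ω | Xbar 0 ω = a}).toReal = pi a)
    (σ2 : ℝ)
    (hσ2 : Tendsto (fun n : ℕ =>
        variance (fun ω => ∑ i ∈ Finset.range n,
          Real.log (Q (Xbar i ω) (Xbar (i + 1) ω) / pi (Xbar (i + 1) ω))) μ' / n)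
      atTop (𝓝 σ2)) :
    σ2 = 0 ↔ ∀ (n : ℕ) (w : Fin n → A),
      (μ' {ω | ∀ i : Fin n, Xbar (i : ℕ) ω = w i}).toReal
        = (1 / (Fintype.card A : ℝ)) ^ n :=
  stmt2_general μ' Xbar Q pi hQpos hQrow hdouble hunif hMarkov' hinit' σ2 hσ2
end
end

section
/- Let {X_n} be a Markov chain on the finite alphabet A = {1,…,m} with all-positive transition matrix and arbitrary initial distribution. Let Θ ⊂ ℝ^{m(m−1)} parametrize all all-positive m×m transition matrices Q_θ, let Φ ⊂ ℝ^{m−1} parametrize all all-positive probability vectors, embedded in Θ via h(φ) yielding the transition matrix with all rows equal to φ, and let L_n(X_0^n; θ) = log ∏_{i=1}^n Q_θ(X_i|X_{i−1}) be the conditional log-likelihood. Then the likelihood-ratio statistic Δ_n = 2[ max_{θ∈Θ} L_n(X_0^n; θ) − max_{φ∈Φ} L_n(X_0^n; h(φ)) ] satisfies Δ_n = 2n Î_n, where Î_n is the plug-in estimator of mutual information computed from the bivariate empirical distribution of the sample X_0^n. -/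
open MeasureTheory ProbabilityTheory Filter Finset Topology
open scoped NNReal

noncomputable section

/-! The unconstrained maximum of `∑ t, c t * log (q t)` over positive probability vectors `q` is
`∑ t, c t * log (c t / ∑ s, c s)` (Gibbs' inequality). It is attained only when every `c t` is
positive, but the additively smoothed estimates `(c t + ε) / (∑ s, c s + |T| ε)` approach it as
`ε → 0⁺`. Applied row by row to the pair counts of the sample, and once to the counts of
`X₁, …, Xₙ`, this computes both maximised log-likelihoods in closed form; their difference is `n`
times the plug-in mutual information by the chain rule for entropy. -/

open Real

section MaxLogLikelihood

variable {T U : Type*} [Fintype T] [Fintype U]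

lemma mul_log_le_mul_log_div_add {c q N : ℝ} (hc : 0 ≤ c) (hq : 0 < q) (hcN : c ≤ N) :
    c * log q ≤ c * log (c / N) + (q * N - c) := by
  rcases hc.eq_or_lt with rfl | hc
  · simpa using mul_nonneg hq.le hcN
  have hN : 0 < N := hc.trans_le hcN
  have hlog : log q - log (c / N) = log (q * N / c) := by
    rw [← log_div hq.ne' (by positivity)]
    congr 1
    field_simp
  calc c * log q = c * log (c / N) + c * log (q * N / c) := by rw [← hlog]; ring
    _ ≤ c * log (c / N) + c * (q * N / c - 1) := by
        gcongr
        exact log_le_sub_one_of_pos (by positivity)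
    _ = c * log (c / N) + (q * N - c) := by field_simp

theorem sum_mul_log_le_sum_mul_log_div {c q : T → ℝ} (hc : ∀ t, 0 ≤ c t) (hq : ∀ t, 0 < q t)
    (hq1 : ∑ t, q t = 1) :
    ∑ t, c t * log (q t) ≤ ∑ t, c t * log (c t / ∑ s, c s) := by
  set N := ∑ s, c s
  calc ∑ t, c t * log (q t) ≤ ∑ t, (c t * log (c t / N) + (q t * N - c t)) :=
        sum_le_sum fun t _ =>
          mul_log_le_mul_log_div_add (hc t) (hq t) (single_le_sum (fun s _ => hc s) (mem_univ t))
    _ = ∑ t, c t * log (c t / N) := by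
        rw [sum_add_distrib, sum_sub_distrib, ← sum_mul, hq1, one_mul, sub_self, add_zero]

def addSmooth (c : T → ℝ) (ε : ℝ) (t : T) : ℝ :=
  (c t + ε) / (∑ s, c s + Fintype.card T * ε)

lemma addSmooth_pos {c : T → ℝ} (hc : ∀ t, 0 ≤ c t) {ε : ℝ} (hε : 0 < ε) (t : T) :
    0 < addSmooth c ε t := by
  have : Nonempty T := ⟨t⟩
  have := sum_nonneg fun s (_ : s ∈ univ) => hc s
  have := hc t
  unfold addSmooth
  positivity

lemma sum_addSmooth [Nonempty T] {c : T → ℝ} (hc : ∀ t, 0 ≤ c t) {ε : ℝ} (hε : 0 < ε) :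
    ∑ t, addSmooth c ε t = 1 := by
  have := sum_nonneg fun s (_ : s ∈ univ) => hc s
  have hden : ∑ s, c s + Fintype.card T * ε ≠ 0 := by positivity
  simp only [addSmooth]
  rw [← sum_div, sum_add_distrib, sum_const, card_univ, nsmul_eq_mul, div_self hden]

lemma tendsto_mul_log_add_div_add {c N : ℝ} (hc : 0 ≤ c) (hcN : c ≤ N) (m : ℝ) :
    Tendsto (fun ε => c * log ((c + ε) / (N + m * ε))) (𝓝 0) (𝓝 (c * log (c / N))) := by
  rcases hc.eq_or_lt with rfl | hc
  · simp
  have hN : 0 < N := hc.trans_le hcN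
  have hcont : ContinuousAt (fun ε => c * log ((c + ε) / (N + m * ε))) 0 := by
    refine continuousAt_const.mul (ContinuousAt.log ?_ ?_)
    · exact ContinuousAt.div (by fun_prop) (by fun_prop) (by simpa using hN.ne')
    · simpa using div_ne_zero hc.ne' hN.ne'
  simpa using hcont.tendsto

lemma tendsto_sum_mul_log_addSmooth {c : T → ℝ} (hc : ∀ t, 0 ≤ c t) :
    Tendsto (fun ε => ∑ t, c t * log (addSmooth c ε t)) (𝓝[>] 0)
      (𝓝 (∑ t, c t * log (c t / ∑ s, c s))) :=
  tendsto_finsetSum _ fun t _ =>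
    (tendsto_mul_log_add_div_add (hc t) (single_le_sum (fun s _ => hc s) (mem_univ t)) _).mono_left
      nhdsWithin_le_nhds

theorem isLUB_sum_mul_log [Nonempty T] {c : T → ℝ} (hc : ∀ t, 0 ≤ c t) :
    IsLUB {L | ∃ q : T → ℝ, (∀ t, 0 < q t) ∧ ∑ t, q t = 1 ∧ L = ∑ t, c t * log (q t)}
      (∑ t, c t * log (c t / ∑ s, c s)) := by
  refine isLUB_of_mem_closure ?_ (mem_closure_of_tendsto (tendsto_sum_mul_log_addSmooth hc) ?_)
  · rintro _ ⟨q, hq, hq1, rfl⟩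
    exact sum_mul_log_le_sum_mul_log_div hc hq hq1
  · filter_upwards [self_mem_nhdsWithin] with ε (hε : 0 < ε)
    exact ⟨addSmooth c ε, addSmooth_pos hc hε, sum_addSmooth hc hε, rfl⟩

theorem isLUB_sum_sum_mul_log [Nonempty U] {c : T → U → ℝ} (hc : ∀ a b, 0 ≤ c a b) :
    IsLUB {L | ∃ Q : T → U → ℝ, (∀ a b, 0 < Q a b) ∧ (∀ a, ∑ b, Q a b = 1) ∧
        L = ∑ a, ∑ b, c a b * log (Q a b)}
      (∑ a, ∑ b, c a b * log (c a b / ∑ b', c a b')) := by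
  refine isLUB_of_mem_closure ?_ (mem_closure_of_tendsto
    (tendsto_finsetSum _ fun a _ => tendsto_sum_mul_log_addSmooth (hc a)) ?_)
  · rintro _ ⟨Q, hQ, hQ1, rfl⟩
    exact sum_le_sum fun a _ => sum_mul_log_le_sum_mul_log_div (hc a) (hQ a) (hQ1 a)
  · filter_upwards [self_mem_nhdsWithin] with ε (hε : 0 < ε)
    exact ⟨fun a => addSmooth (c a) ε, fun a => addSmooth_pos (hc a) hε,
      fun a => sum_addSmooth (hc a) hε, rfl⟩

end MaxLogLikelihood

section SampleCount

variable {T U : Type*} [DecidableEq T] [DecidableEq U]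

def sampleCount (y : ℕ → T) (n : ℕ) (t : T) : ℝ :=
  ∑ i ∈ range n, if y i = t then 1 else 0

lemma sampleCount_nonneg (y : ℕ → T) (n : ℕ) (t : T) : 0 ≤ sampleCount y n t :=
  sum_nonneg fun _ _ => by positivity

lemma sum_range_eq_sum_sampleCount_mul [Fintype T] (y : ℕ → T) (n : ℕ) (f : T → ℝ) :
    ∑ i ∈ range n, f (y i) = ∑ t, sampleCount y n t * f t := by
  simp_rw [sampleCount, sum_mul, ite_mul, one_mul, zero_mul]
  rw [sum_comm]
  simp

lemma sum_sampleCount [Fintype T] (y : ℕ → T) (n : ℕ) : ∑ t, sampleCount y n t = n := by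
  simpa using (sum_range_eq_sum_sampleCount_mul y n fun _ => 1).symm

lemma sum_sampleCount_pair_right [Fintype U] (u : ℕ → T) (v : ℕ → U) (n : ℕ) (a : T) :
    ∑ b, sampleCount (fun i => (u i, v i)) n (a, b) = sampleCount u n a := by
  simp only [sampleCount]
  rw [sum_comm]
  simp [Prod.ext_iff, ite_and]

lemma sum_sampleCount_pair_left [Fintype T] (u : ℕ → T) (v : ℕ → U) (n : ℕ) (b : U) :
    ∑ a, sampleCount (fun i => (u i, v i)) n (a, b) = sampleCount v n b := by
  simp only [sampleCount]
  rw [sum_comm]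
  simp [Prod.ext_iff, ite_and]

theorem isLUB_logLik [Fintype T] [Nonempty T] (y : ℕ → T) (n : ℕ) :
    IsLUB {L | ∃ φ : T → ℝ, (∀ t, 0 < φ t) ∧ (∑ t, φ t = 1) ∧
        L = ∑ i ∈ range n, log (φ (y i))}
      (∑ t, sampleCount y n t * log (sampleCount y n t / n)) := by
  have hcount (φ : T → ℝ) : ∑ i ∈ range n, log (φ (y i)) = ∑ t, sampleCount y n t * log (φ t) :=
    sum_range_eq_sum_sampleCount_mul y n fun t => log (φ t)
  simp_rw [hcount, ← sum_sampleCount y n]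
  exact isLUB_sum_mul_log (sampleCount_nonneg y n)

theorem isLUB_condLogLik [Fintype T] [Fintype U] [Nonempty U] (u : ℕ → T) (v : ℕ → U) (n : ℕ) :
    IsLUB {L | ∃ Q : T → U → ℝ, (∀ a b, 0 < Q a b) ∧ (∀ a, ∑ b, Q a b = 1) ∧
        L = ∑ i ∈ range n, log (Q (u i) (v i))}
      (∑ a, ∑ b, sampleCount (fun i => (u i, v i)) n (a, b) *
        log (sampleCount (fun i => (u i, v i)) n (a, b) / sampleCount u n a)) := by
  have hcount (Q : T → U → ℝ) : ∑ i ∈ range n, log (Q (u i) (v i)) =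
      ∑ a, ∑ b, sampleCount (fun i => (u i, v i)) n (a, b) * log (Q a b) := by
    rw [← Fintype.sum_prod_type']
    exact sum_range_eq_sum_sampleCount_mul (fun i => (u i, v i)) n fun p => log (Q p.1 p.2)
  simp_rw [hcount, ← sum_sampleCount_pair_right u v n]
  exact isLUB_sum_sum_mul_log fun a b => sampleCount_nonneg _ n _

lemma empPair_eq_sampleCount (x : ℕ → T) (n : ℕ) (a b : T) :
    empPair x n a b = sampleCount (fun i => (x i, x (i + 1))) n (a, b) / n := by
  simp [empPair, sampleCount, Prod.ext_iff]

end SampleCount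

section PluginMutualInformation

variable {T U : Type*} [Fintype T] [Fintype U]

lemma mul_ent_div (w : T → ℝ) {N : ℝ} (hN : N ≠ 0) :
    N * ent (fun t => w t / N) = -∑ t, w t * log (w t / N) := by
  rw [ent, mul_sum, ← sum_neg_distrib]
  refine sum_congr rfl fun t _ => ?_
  rw [negMulLog]
  field_simp

/-- The chain rule `H(X₁ | X₀) = H(X₀, X₁) - H(X₀)`, for the counts `c` of a sample of size `N`. -/
lemma sum_sum_mul_log_div_rowSum {c : T → U → ℝ} (hc : ∀ a b, 0 ≤ c a b) {N : ℝ} (hN : 0 < N) :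
    ∑ a, ∑ b, c a b * log (c a b / ∑ b', c a b') =
      ∑ a, ∑ b, c a b * log (c a b / N) - ∑ a, (∑ b, c a b) * log ((∑ b, c a b) / N) := by
  simp_rw [sum_mul, ← sum_sub_distrib, ← mul_sub]
  refine sum_congr rfl fun a _ => sum_congr rfl fun b _ => ?_
  rcases (hc a b).eq_or_lt with h | h
  · simp [← h]
  have hrow : 0 < ∑ b', c a b' := h.trans_le (single_le_sum (fun b' _ => hc a b') (mem_univ b))
  rw [← log_div (by positivity) (by positivity), div_div_div_cancel_right₀ hN.ne']

variable [DecidableEq T]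

lemma empFst_eq_sampleCount (x : ℕ → T) (n : ℕ) :
    empFst x n = fun a => sampleCount x n a / n := by
  ext a
  simp_rw [empFst, empPair_eq_sampleCount, ← sum_div, sum_sampleCount_pair_right]

lemma empSnd_eq_sampleCount (x : ℕ → T) (n : ℕ) :
    empSnd x n = fun b => sampleCount (fun i => x (i + 1)) n b / n := by
  ext b
  simp_rw [empSnd, empPair_eq_sampleCount, ← sum_div, sum_sampleCount_pair_left]

theorem two_mul_logLikRatio_eq (x : ℕ → T) {n : ℕ} (hn : 0 < n) :
    2 * (∑ a, ∑ b, sampleCount (fun i => (x i, x (i + 1))) n (a, b) *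
          log (sampleCount (fun i => (x i, x (i + 1))) n (a, b) / sampleCount x n a)
        - ∑ b, sampleCount (fun i => x (i + 1)) n b *
          log (sampleCount (fun i => x (i + 1)) n b / n))
      = 2 * n * pluginMI x n := by
  have hn' : (n : ℝ) ≠ 0 := by positivity
  have hchain := sum_sum_mul_log_div_rowSum
    (c := fun a b => sampleCount (fun i => (x i, x (i + 1))) n (a, b))
    (fun a b => sampleCount_nonneg _ n _) (Nat.cast_pos.2 hn)
  simp only [sum_sampleCount_pair_right] at hchain
  have hpair : n * ent (fun p : T × T => empPair x n p.1 p.2) =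
      -∑ a, ∑ b, sampleCount (fun i => (x i, x (i + 1))) n (a, b) *
        log (sampleCount (fun i => (x i, x (i + 1))) n (a, b) / n) := by
    simp_rw [empPair_eq_sampleCount]
    rw [mul_ent_div _ hn', Fintype.sum_prod_type]
  have hfst := mul_ent_div (sampleCount x n) hn'
  have hsnd := mul_ent_div (sampleCount (fun i => x (i + 1)) n) hn'
  rw [← empFst_eq_sampleCount] at hfst
  rw [← empSnd_eq_sampleCount] at hsnd
  rw [pluginMI, hchain]
  linear_combination (-2) * hfst - 2 * hsnd + 2 * hpair

end PluginMutualInformation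

theorem stmt4_general {Ω A : Type*} [Fintype A] [DecidableEq A]
    (X : ℕ → Ω → A)
    (n : ℕ) (hn : 0 < n) (ω : Ω) :
    2 * (sSup {L : ℝ | ∃ Q' : A → A → ℝ, (∀ a a', 0 < Q' a a') ∧
            (∀ a, ∑ a', Q' a a' = 1) ∧
            L = ∑ i ∈ Finset.range n, Real.log (Q' (X i ω) (X (i + 1) ω))}
        - sSup {L : ℝ | ∃ φ : A → ℝ, (∀ a, 0 < φ a) ∧ (∑ a, φ a = 1) ∧
            L = ∑ i ∈ Finset.range n, Real.log (φ (X (i + 1) ω))})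
      = 2 * n * pluginMI (fun i => X i ω) n := by
  have : Nonempty A := ⟨X 0 ω⟩
  have hcond := isLUB_condLogLik (fun i => X i ω) (fun i => X (i + 1) ω) n
  have hiid := isLUB_logLik (fun i => X (i + 1) ω) n
  rw [hcond.csSup_eq hcond.nonempty, hiid.csSup_eq hiid.nonempty]
  exact two_mul_logLikRatio_eq (fun i => X i ω) hn

/-- **Proposition 1** (Kontoyiannis–Skoularidou): the likelihood-ratio statistic
`Δ_n`, for testing the i.i.d. null model within the all-positive Markov model,
is exactly equal to `2n` times the plug-in estimator of the mutual information. -/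
theorem stmt4 {Ω A : Type*} [MeasurableSpace Ω]
    [MeasurableSpace A] [Fintype A] [DecidableEq A]
    (μ : Measure Ω) [IsProbabilityMeasure μ]
    (X : ℕ → Ω → A) (Q : A → A → ℝ)
    (hXmeas : ∀ i, Measurable (X i))
    (hQpos : ∀ a a', 0 < Q a a') (hQrow : ∀ a, ∑ a', Q a a' = 1)
    (hMarkov : IsMarkov μ X Q)
    (n : ℕ) (hn : 0 < n) (ω : Ω) :
    2 * (sSup {L : ℝ | ∃ Q' : A → A → ℝ, (∀ a a', 0 < Q' a a') ∧
            (∀ a, ∑ a', Q' a a' = 1) ∧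
            L = ∑ i ∈ Finset.range n, Real.log (Q' (X i ω) (X (i + 1) ω))}
        - sSup {L : ℝ | ∃ φ : A → ℝ, (∀ a, 0 < φ a) ∧ (∑ a, φ a = 1) ∧
            L = ∑ i ∈ Finset.range n, Real.log (φ (X (i + 1) ω))})
      = 2 * n * pluginMI (fun i => X i ω) n :=
  stmt4_general X n hn ω

end
end

section
/- Let X_0, X_1, …, X_n be a sample from a finite alphabet A, with bivariate empirical distribution P̂_{X_0X_1,n}(a,a') = (1/n) Σ_{i=1}^n 1{X_{i−1}=a, X_i=a'} and first-coordinate marginal P̂_{X_0,n}. Then the maximum over all strictly positive transition matrices Q on A of the conditional log-likelihood Σ_{i=1}^n log Q(X_i|X_{i−1}) equals n[ H(P̂_{X_0,n}) − H(P̂_{X_0X_1,n}) ], and is attained when Q(a'|a) = P̂_{X_0X_1,n}(a,a') / P̂_{X_0,n}(a) for all a with P̂_{X_0,n}(a) > 0. -/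
open MeasureTheory ProbabilityTheory Filter Finset Topology
open scoped NNReal

noncomputable section

/-!
With transition counts `N(a,a') = n P̂(a,a')`, the log-likelihood of `Q` is
`∑ N(a,a') log Q(a,a')`, while `n [H(P̂₀) − H(P̂)] = ∑ N(a,a') log (P̂(a,a') / P̂₀(a))`.
Row by row, Gibbs' inequality `∑ p log q ≤ ∑ p log (p / ∑ p)` gives the upper bound, with
equality at the empirical conditional distribution `R`. Since `R` may vanish off the observed
transitions, it is approached by the strictly positive mixtures `t R + (1 - t) · uniform`; the
likelihood is continuous along them because `R` is positive on every observed transition.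
-/

open Real

theorem mul_log_le_mul_log_div_add_sub {p q s : ℝ} (hp : 0 ≤ p) (hps : p ≤ s) (hq : 0 < q) :
    p * log q ≤ p * log (p / s) + (q * s - p) := by
  rcases hp.eq_or_lt with rfl | hp
  · simpa using mul_nonneg hq.le hps
  have hs : 0 < s := hp.trans_le hps
  have key := log_le_sub_one_of_pos (show 0 < q * s / p by positivity)
  rw [log_div (by positivity) hp.ne', log_mul hq.ne' hs.ne'] at key
  rw [log_div hp.ne' hs.ne']
  have h := mul_le_mul_of_nonneg_left key hp.le
  rw [mul_sub_one, mul_div_cancel₀ _ hp.ne'] at h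
  linarith

theorem sum_mul_log_le_sum_mul_log_div_sum {β : Type*} [Fintype β] {p q : β → ℝ}
    (hp : ∀ b, 0 ≤ p b) (hq : ∀ b, 0 < q b) (hq_sum : ∑ b, q b = 1) :
    ∑ b, p b * log (q b) ≤ ∑ b, p b * log (p b / ∑ b', p b') := by
  have hle : ∀ b, p b ≤ ∑ b', p b' := fun b =>
    Finset.single_le_sum (fun b' _ => hp b') (Finset.mem_univ b)
  calc ∑ b, p b * log (q b)
      ≤ ∑ b, (p b * log (p b / ∑ b', p b') + (q b * ∑ b', p b' - p b)) :=
        Finset.sum_le_sum fun b _ => mul_log_le_mul_log_div_add_sub (hp b) (hle b) (hq b)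
    _ = ∑ b, p b * log (p b / ∑ b', p b') := by
        rw [Finset.sum_add_distrib, Finset.sum_sub_distrib, ← Finset.sum_mul, hq_sum]
        ring

theorem ent_sum_sub_ent_eq_sum_mul_log_div {α β : Type*} [Fintype α] [Fintype β]
    {p : α → β → ℝ} (hp : ∀ a b, 0 ≤ p a b) :
    ent (fun a => ∑ b, p a b) - ent (fun ab : α × β => p ab.1 ab.2)
      = ∑ a, ∑ b, p a b * log (p a b / ∑ b', p a b') := by
  simp only [ent, Fintype.sum_prod_type, negMulLog, ← Finset.sum_sub_distrib]
  refine Finset.sum_congr rfl fun a _ => ?_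
  rw [neg_mul, Finset.sum_mul, ← Finset.sum_neg_distrib, ← Finset.sum_sub_distrib]
  refine Finset.sum_congr rfl fun b _ => ?_
  rcases (hp a b).eq_or_lt with h | h
  · simp [← h]
  have hs : 0 < ∑ b', p a b' :=
    h.trans_le (Finset.single_le_sum (fun b' _ => hp a b') (Finset.mem_univ b))
  rw [log_div h.ne' hs.ne']
  ring

section Empirical

variable {A : Type*} [DecidableEq A]

def logLik (x : ℕ → A) (n : ℕ) (Q : A → A → ℝ) : ℝ :=
  ∑ i ∈ Finset.range n, log (Q (x i) (x (i + 1)))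

theorem empPair_nonneg (x : ℕ → A) (n : ℕ) (a a' : A) : 0 ≤ empPair x n a a' :=
  div_nonneg (Finset.sum_nonneg fun _ _ => by positivity) n.cast_nonneg

theorem empPair_pos_of_lt (x : ℕ → A) {n i : ℕ} (hi : i < n) :
    0 < empPair x n (x i) (x (i + 1)) :=
  div_pos (Finset.sum_pos' (fun _ _ => by positivity) ⟨i, Finset.mem_range.2 hi, by simp⟩)
    (Nat.cast_pos.2 (i.zero_le.trans_lt hi))

theorem empPair_le_empFst [Fintype A] (x : ℕ → A) (n : ℕ) (a a' : A) :
    empPair x n a a' ≤ empFst x n a :=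
  Finset.single_le_sum (fun b _ => empPair_nonneg x n a b) (Finset.mem_univ a')

theorem sum_range_eq_mul_sum_empPair [Fintype A] (x : ℕ → A) (n : ℕ) (f : A → A → ℝ) :
    ∑ i ∈ Finset.range n, f (x i) (x (i + 1))
      = n * ∑ a, ∑ a', empPair x n a a' * f a a' := by
  rcases eq_or_ne n 0 with rfl | hn
  · simp
  replace hn : (n : ℝ) ≠ 0 := Nat.cast_ne_zero.2 hn
  have hcount : ∀ a a', n * (empPair x n a a' * f a a')
      = ∑ i ∈ Finset.range n, if x i = a ∧ x (i + 1) = a' then f a a' else 0 := by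
    intro a a'
    rw [empPair, div_mul_eq_mul_div, mul_div_cancel₀ _ hn, Finset.sum_mul]
    simp only [ite_mul, one_mul, zero_mul]
  simp only [Finset.mul_sum, hcount]
  rw [eq_comm, Finset.sum_congr rfl fun a _ => Finset.sum_comm, Finset.sum_comm]
  simp [ite_and]

variable [Fintype A]

theorem ent_empFst_sub_ent_empPair (x : ℕ → A) (n : ℕ) :
    ent (empFst x n) - ent (fun p : A × A => empPair x n p.1 p.2)
      = ∑ a, ∑ a', empPair x n a a' * log (empPair x n a a' / empFst x n a) :=
  ent_sum_sub_ent_eq_sum_mul_log_div (empPair_nonneg x n)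

theorem logLik_le (x : ℕ → A) (n : ℕ) {Q : A → A → ℝ} (hQ_pos : ∀ a a', 0 < Q a a')
    (hQ_sum : ∀ a, ∑ a', Q a a' = 1) :
    logLik x n Q ≤ n * (ent (empFst x n) - ent (fun p : A × A => empPair x n p.1 p.2)) := by
  rw [logLik, sum_range_eq_mul_sum_empPair x n fun a a' => log (Q a a'),
    ent_empFst_sub_ent_empPair]
  exact mul_le_mul_of_nonneg_left (Finset.sum_le_sum fun a _ =>
    sum_mul_log_le_sum_mul_log_div_sum (empPair_nonneg x n a) (hQ_pos a) (hQ_sum a)) n.cast_nonneg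

theorem logLik_eq_of_eq_empPair_div_empFst (x : ℕ → A) (n : ℕ) {Q : A → A → ℝ}
    (hQ : ∀ a a', 0 < empFst x n a → Q a a' = empPair x n a a' / empFst x n a) :
    logLik x n Q = n * (ent (empFst x n) - ent (fun p : A × A => empPair x n p.1 p.2)) := by
  rw [ent_empFst_sub_ent_empPair]
  calc logLik x n Q
      = ∑ i ∈ Finset.range n, log (empPair x n (x i) (x (i + 1)) / empFst x n (x i)) :=
        Finset.sum_congr rfl fun i hi => by
          rw [hQ _ _ ((empPair_pos_of_lt x (Finset.mem_range.1 hi)).trans_le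
            (empPair_le_empFst x n _ _))]
    _ = _ := sum_range_eq_mul_sum_empPair x n fun a a' => log (empPair x n a a' / empFst x n a)

def empCond (x : ℕ → A) (n : ℕ) (a a' : A) : ℝ :=
  if 0 < empFst x n a then empPair x n a a' / empFst x n a else (Fintype.card A : ℝ)⁻¹

theorem empCond_nonneg (x : ℕ → A) (n : ℕ) (a a' : A) : 0 ≤ empCond x n a a' := by
  unfold empCond
  split_ifs with h
  · exact div_nonneg (empPair_nonneg x n a a') h.le
  · positivity

theorem sum_empCond [Nonempty A] (x : ℕ → A) (n : ℕ) (a : A) : ∑ a', empCond x n a a' = 1 := by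
  unfold empCond
  split_ifs with h
  · rw [← Finset.sum_div, ← empFst, div_self h.ne']
  · simp

theorem empCond_pos_of_lt (x : ℕ → A) {n i : ℕ} (hi : i < n) :
    0 < empCond x n (x i) (x (i + 1)) := by
  have hpair := empPair_pos_of_lt x hi
  have hfst := hpair.trans_le (empPair_le_empFst x n _ _)
  rw [empCond, if_pos hfst]
  exact div_pos hpair hfst

end Empirical

theorem logLik_mem_closure {A : Type*} [Fintype A] (x : ℕ → A) (n : ℕ) {R : A → A → ℝ}
    (hR_nonneg : ∀ a a', 0 ≤ R a a') (hR_sum : ∀ a, ∑ a', R a a' = 1)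
    (hR_path : ∀ i < n, R (x i) (x (i + 1)) ≠ 0) :
    logLik x n R ∈ closure {L | ∃ Q : A → A → ℝ, (∀ a a', 0 < Q a a') ∧
      (∀ a, ∑ a', Q a a' = 1) ∧ L = logLik x n Q} := by
  have : Nonempty A := ⟨x 0⟩
  have hk : (0 : ℝ) < Fintype.card A := Nat.cast_pos.2 Fintype.card_pos
  let Q : ℝ → A → A → ℝ := fun t a a' => t * R a a' + (1 - t) / Fintype.card A
  have hQ_tendsto : ∀ a a', Tendsto (fun t => Q t a a') (𝓝[<] 1) (𝓝 (R a a')) := fun a a' => by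
    have hcont : Continuous fun t => Q t a a' := by fun_prop
    simpa [Q] using (hcont.tendsto 1).mono_left nhdsWithin_le_nhds
  refine mem_closure_of_tendsto (f := fun t => logLik x n (Q t))
    (tendsto_finsetSum _ fun i hi => (hQ_tendsto _ _).log (hR_path i (Finset.mem_range.1 hi))) ?_
  filter_upwards [Ioo_mem_nhdsLT one_pos] with t ht
  refine ⟨Q t, fun a a' => ?_, fun a => ?_, rfl⟩
  · exact add_pos_of_nonneg_of_pos (mul_nonneg ht.1.le (hR_nonneg a a'))
      (div_pos (sub_pos.2 ht.2) hk)
  · rw [Finset.sum_add_distrib, ← Finset.mul_sum, hR_sum, Finset.sum_const, Finset.card_univ,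
      nsmul_eq_mul]
    field_simp
    ring

theorem stmt16_general {A : Type*} [Fintype A] [DecidableEq A]
    (x : ℕ → A) (n : ℕ) :
    IsLUB {L : ℝ | ∃ Q : A → A → ℝ, (∀ a a', 0 < Q a a') ∧
        (∀ a, ∑ a', Q a a' = 1) ∧
        L = ∑ i ∈ Finset.range n, Real.log (Q (x i) (x (i + 1)))}
      ((n : ℝ) * (ent (empFst x n) - ent (fun p : A × A => empPair x n p.1 p.2)))
    ∧ ∀ Q : A → A → ℝ, (∀ a a', 0 ≤ Q a a') → (∀ a, ∑ a', Q a a' = 1) →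
        (∀ a a', 0 < empFst x n a → Q a a' = empPair x n a a' / empFst x n a) →
        ∑ i ∈ Finset.range n, Real.log (Q (x i) (x (i + 1)))
          = (n : ℝ) * (ent (empFst x n) - ent (fun p : A × A => empPair x n p.1 p.2)) := by
  have : Nonempty A := ⟨x 0⟩
  have hR : logLik x n (empCond x n)
      = n * (ent (empFst x n) - ent (fun p : A × A => empPair x n p.1 p.2)) :=
    logLik_eq_of_eq_empPair_div_empFst x n fun a a' ha => if_pos ha
  refine ⟨isLUB_of_mem_closure ?_ ?_, fun Q _ _ hQ => logLik_eq_of_eq_empPair_div_empFst x n hQ⟩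
  · rintro L ⟨Q, hQ_pos, hQ_sum, rfl⟩
    exact logLik_le x n hQ_pos hQ_sum
  · rw [← hR]
    exact logLik_mem_closure x n (empCond_nonneg x n) (sum_empCond x n)
      fun i hi => (empCond_pos_of_lt x hi).ne'

/-- Maximum-likelihood computation: the supremum, over all strictly positive
transition matrices `Q`, of the conditional log-likelihood
`∑_{i=1}^n log Q(x_i | x_{i−1})` equals `n [H(P̂_{X₀,n}) − H(P̂_{X₀X₁,n})]`, and
this value is attained by any transition matrix whose rows at states of positive
empirical mass coincide with the empirical conditional distribution. -/
theorem stmt16 {A : Type*} [Fintype A] [DecidableEq A] [Nonempty A]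
    (x : ℕ → A) (n : ℕ) (hn : 0 < n) :
    IsLUB {L : ℝ | ∃ Q : A → A → ℝ, (∀ a a', 0 < Q a a') ∧
        (∀ a, ∑ a', Q a a' = 1) ∧
        L = ∑ i ∈ Finset.range n, Real.log (Q (x i) (x (i + 1)))}
      ((n : ℝ) * (ent (empFst x n) - ent (fun p : A × A => empPair x n p.1 p.2)))
    ∧ ∀ Q : A → A → ℝ, (∀ a a', 0 ≤ Q a a') → (∀ a, ∑ a', Q a a' = 1) →
        (∀ a a', 0 < empFst x n a → Q a a' = empPair x n a a' / empFst x n a) →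
        ∑ i ∈ Finset.range n, Real.log (Q (x i) (x (i + 1)))
          = (n : ℝ) * (ent (empFst x n) - ent (fun p : A × A => empPair x n p.1 p.2)) :=
  stmt16_general x n
end
end
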